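/- arXiv:2005.00538 — 3 statements merged into one kernel-verified Lean document; each statement's English description precedes it below -/
import Mathlib

section
/- Let R be a unital 2- and 3-torsion free alternative ring with a nontrivial idempotent e_1, e_2 = 1 − e_1, satisfying: for each i ∈ {1,2}, if x ∈ R has (x r)e_i = 0 for all r ∈ R, then x = 0. Let φ : R → R be an additive commuting map. Then φ(1) ∈ R_11 + R_22 and φ(e_i) ∈ R_11 + R_22 for i = 1,2 (i.e. e_1 φ(1) e_2 = e_2 φ(1) e_1 = 0 and e_1 φ(e_i) e_2 = e_2 φ(e_i) e_1 = 0). Moreover, for each i ∈ {1,2} there exists z_i ∈ Z(R) such that e_i φ(1) e_i = z_i e_i. -/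
/-- The pair of Peirce idempotents associated to an idempotent `e`:
`peirceE e 0 = e₁ = e` and `peirceE e 1 = e₂ = 1 - e`. -/
def peirceE {R : Type*} [NonAssocRing R] (e : R) (i : Fin 2) : R :=
  if i = 0 then e else 1 - e

/-- The Peirce component `R_ij = eᵢ R eⱼ` of a unital alternative ring relative
to the idempotent `e` (indices `0, 1` standing for `1, 2`). -/
def peirceSet {R : Type*} [NonAssocRing R] (e : R) (i j : Fin 2) : Set R :=
  {x : R | ∃ a : R, x = peirceE e i * (a * peirceE e j)}

/-!
Linearizing `[φ(x), x] = 0` at `1 + y` gives `[φ(1), y] = 0`, so `φ(1)` is central; and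
`φ(eᵢ)` commutes with `eᵢ`, hence with `e₁`. An element `a` commuting with an idempotent `e`
has vanishing off-diagonal Peirce components, since `e (a (1 - e)) = e a - e (e a)` and the
left alternative law turns `e (e a)` into `e a`. Finally `eᵢ φ(1) eᵢ = φ(1) eᵢ`, so `zᵢ = φ(1)`.
-/

section

variable {R : Type*} [NonAssocRing R]

theorem commute_map_one_of_commuting {φ : R → R} (hadd : ∀ x y : R, φ (x + y) = φ x + φ y)
    (hcomm : ∀ x : R, Commute (φ x) x) (y : R) : Commute (φ 1) y := by
  have h := hcomm (1 + y)
  rw [hadd, Commute, SemiconjBy] at h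
  simp only [add_mul, mul_add, one_mul, mul_one, (hcomm y).eq] at h
  rw [Commute, SemiconjBy, ← sub_eq_zero, ← sub_eq_zero.mpr h]
  abel

theorem mul_mul_self_of_commute {e a : R} (he : IsIdempotentElem e)
    (halt : ∀ y : R, e * e * y = e * (e * y)) (ha : Commute a e) : e * (a * e) = a * e := by
  rw [ha.eq, ← halt, he.eq]

theorem peirce_offDiag_eq_zero_of_commute {e a : R} (he : IsIdempotentElem e)
    (halt : ∀ y : R, e * e * y = e * (e * y)) (ha : Commute a e) :
    e * (a * (1 - e)) = 0 ∧ (1 - e) * (a * e) = 0 := by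
  have hee : e * (e * a) = e * a := by rw [← halt, he.eq]
  constructor
  · rw [mul_sub, mul_one, ha.eq, mul_sub, hee, sub_self]
  · rw [sub_mul, one_mul, ha.eq, hee, sub_self]

theorem isIdempotentElem_peirceE {e : R} (he : IsIdempotentElem e) (i : Fin 2) :
    IsIdempotentElem (peirceE e i) := by
  unfold peirceE
  split_ifs
  exacts [he, he.one_sub]

theorem Commute.of_peirceE {e a : R} {i : Fin 2} (ha : Commute a (peirceE e i)) :
    Commute a e := by
  unfold peirceE at ha
  split_ifs at ha
  · exact ha
  · simpa using (Commute.one_right a).sub_right ha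

end

theorem stmt7_general {R : Type*} [NonAssocRing R]
    (alt1 : ∀ x y : R, x * x * y = x * (x * y))
    (e₁ : R) (he : e₁ * e₁ = e₁)
    (φ : R → R) (hadd : ∀ x y : R, φ (x + y) = φ x + φ y)
    (hcomm : ∀ x : R, φ x * x = x * φ x)
    :
    (e₁ * (φ 1 * (1 - e₁)) = 0 ∧ (1 - e₁) * (φ 1 * e₁) = 0) ∧
    (∀ i : Fin 2, e₁ * (φ (peirceE e₁ i) * (1 - e₁)) = 0 ∧
        (1 - e₁) * (φ (peirceE e₁ i) * e₁) = 0) ∧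
    (∀ i : Fin 2, ∃ z : R, (∀ r : R, z * r = r * z) ∧
        peirceE e₁ i * (φ 1 * peirceE e₁ i) = z * peirceE e₁ i)
    := by
  have hidem : IsIdempotentElem e₁ := he
  have hcomm : ∀ x : R, Commute (φ x) x := hcomm
  have hcentral := commute_map_one_of_commuting hadd hcomm
  refine ⟨peirce_offDiag_eq_zero_of_commute hidem (alt1 e₁) (hcentral e₁),
    fun i => peirce_offDiag_eq_zero_of_commute hidem (alt1 e₁) (hcomm _).of_peirceE,
    fun i => ⟨φ 1, hcentral,
      mul_mul_self_of_commute (isIdempotentElem_peirceE hidem i) (alt1 _) (hcentral _)⟩⟩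

theorem stmt7 {R : Type*} [NonAssocRing R]
    (alt1 : ∀ x y : R, x * x * y = x * (x * y))
    (alt2 : ∀ x y : R, y * x * x = y * (x * x))
    (tor2 : ∀ x : R, (2 : ℕ) • x = 0 → x = 0)
    (tor3 : ∀ x : R, (3 : ℕ) • x = 0 → x = 0)
    (e₁ : R) (he : e₁ * e₁ = e₁) (he0 : e₁ ≠ 0) (he1 : e₁ ≠ 1)
    (hd1 : ∀ x : R, (∀ r : R, x * r * e₁ = 0) → x = 0)
    (hd2 : ∀ x : R, (∀ r : R, x * r * (1 - e₁) = 0) → x = 0)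
    (φ : R → R) (hadd : ∀ x y : R, φ (x + y) = φ x + φ y)
    (hcomm : ∀ x : R, φ x * x = x * φ x)
    :
    (e₁ * (φ 1 * (1 - e₁)) = 0 ∧ (1 - e₁) * (φ 1 * e₁) = 0) ∧
    (∀ i : Fin 2, e₁ * (φ (peirceE e₁ i) * (1 - e₁)) = 0 ∧
        (1 - e₁) * (φ (peirceE e₁ i) * e₁) = 0) ∧
    (∀ i : Fin 2, ∃ z : R, (∀ r : R, z * r = r * z) ∧
        peirceE e₁ i * (φ 1 * peirceE e₁ i) = z * peirceE e₁ i) :=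
  stmt7_general alt1 e₁ he φ hadd hcomm
end

section
/- Let R be a unital 2- and 3-torsion free alternative ring with a nontrivial idempotent e_1, e_2 = 1 − e_1, satisfying: for each i ∈ {1,2}, if x ∈ R has (x r)e_i = 0 for all r ∈ R, then x = 0. Let φ : R → R be an additive commuting map. Then for all i ≠ j in {1,2} and every x_ij ∈ R_ij: e_j φ(x_ij) e_i = 0. -/
theorem AddMonoidHom.apply_add_apply_swap_eq_zero {M N : Type*} [AddCommMonoid M]
    [AddCommMonoid N] (B : M →+ M →+ N) (h : ∀ x, B x x = 0) (x y : M) :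
    B x y + B y x = 0 := by
  simpa only [map_add, AddMonoidHom.add_apply, h, zero_add, add_zero, add_comm (B y x)]
    using h (x + y)

section Alternative

variable {R : Type*} [NonAssocRing R]

theorem mul_mul_add_mul_mul_swap_left (alt1 : ∀ x y : R, x * x * y = x * (x * y))
    (x y z : R) : x * y * z + y * x * z = x * (y * z) + y * (x * z) := by
  have h := (AddMonoidHom.associator.compr₂ (AddMonoidHom.eval z)).apply_add_apply_swap_eq_zero
    (fun x ↦ sub_eq_zero.mpr (alt1 x z)) x y
  rwa [AddMonoidHom.compr₂_apply, AddMonoidHom.compr₂_apply, AddMonoidHom.eval_apply_apply,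
    AddMonoidHom.eval_apply_apply, AddMonoidHom.associator_apply, AddMonoidHom.associator_apply,
    associator_apply, associator_apply, sub_add_sub_comm, sub_eq_zero] at h

theorem mul_mul_add_mul_mul_swap_right (alt2 : ∀ x y : R, y * x * x = y * (x * x))
    (x y z : R) : z * x * y + z * y * x = z * (x * y) + z * (y * x) := by
  have h := (AddMonoidHom.associator z).apply_add_apply_swap_eq_zero
    (fun x ↦ sub_eq_zero.mpr (alt2 x z)) x y
  rwa [AddMonoidHom.associator_apply, AddMonoidHom.associator_apply, associator_apply,
    associator_apply, sub_add_sub_comm, sub_eq_zero] at h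

theorem flexible_of_alternative (alt1 : ∀ x y : R, x * x * y = x * (x * y))
    (alt2 : ∀ x y : R, y * x * x = y * (x * x)) (x y : R) : x * y * x = x * (y * x) := by
  have h := mul_mul_add_mul_mul_swap_left alt1 x y x
  rwa [alt2, add_left_inj] at h

theorem commutator_map_left_eq_commutator_map_right {φ : R → R}
    (hadd : ∀ x y : R, φ (x + y) = φ x + φ y) (hcomm : ∀ x : R, φ x * x = x * φ x) (x y : R) :
    φ x * y - y * φ x = x * φ y - φ y * x := by
  have h := ((AddMonoidHom.mul - AddMonoidHom.mul.flip : R →+ R →+ R).comp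
    (AddMonoidHom.mk' φ hadd)).apply_add_apply_swap_eq_zero
    (fun x ↦ sub_eq_zero.mpr (hcomm x)) x y
  simp only [AddMonoidHom.comp_apply, AddMonoidHom.mk'_apply, AddMonoidHom.sub_apply,
    AddMonoidHom.mul_apply, AddMonoidHom.flip_apply] at h
  rwa [← neg_sub (x * φ y), ← sub_eq_add_neg, sub_eq_zero] at h

variable {e : R}

theorem eq_zero_of_idem_mul_eq_neg (alt1 : ∀ x y : R, x * x * y = x * (x * y))
    (tor2 : ∀ x : R, (2 : ℕ) • x = 0 → x = 0) (he : IsIdempotentElem e) {y : R}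
    (h : e * y = -y) : y = 0 := by
  have h' := alt1 e y
  rw [he.eq, h, mul_neg, h, neg_neg] at h'
  exact tor2 y (by rw [two_nsmul]; nth_rw 1 [← h']; exact neg_add_cancel y)

theorem eq_zero_of_mul_idem_eq_add_self (alt2 : ∀ x y : R, y * x * x = y * (x * x))
    (tor2 : ∀ x : R, (2 : ℕ) • x = 0 → x = 0) (he : IsIdempotentElem e) {y : R}
    (h : y * e = y + y) : y = 0 := by
  have h' : y * e * e = y * e := by rw [alt2, he.eq]
  rw [h, add_mul, h, add_eq_right] at h'
  exact tor2 y (by rwa [two_nsmul])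

theorem peirce₁₂_mul_peirce₁₁ (alt2 : ∀ x y : R, y * x * x = y * (x * x))
    (tor2 : ∀ x : R, (2 : ℕ) • x = 0 → x = 0) (he : IsIdempotentElem e) {x v : R}
    (hxe : x * e = 0) (hev : e * v = v) (hve : v * e = v) : x * v = 0 := by
  have h := mul_mul_add_mul_mul_swap_right alt2 e v x
  rw [hxe, zero_mul, zero_add, hev, hve] at h
  exact eq_zero_of_mul_idem_eq_add_self alt2 tor2 he h

theorem peirce₂₂_mul_peirce₁₂ (alt1 : ∀ x y : R, x * x * y = x * (x * y))
    (tor2 : ∀ x : R, (2 : ℕ) • x = 0 → x = 0) (he : IsIdempotentElem e) {u x : R}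
    (heu : e * u = 0) (hue : u * e = 0) (hex : e * x = x) : u * x = 0 := by
  have h := mul_mul_add_mul_mul_swap_left alt1 e u x
  rw [heu, hue, zero_mul, zero_add, hex, eq_comm, add_eq_zero_iff_eq_neg] at h
  exact eq_zero_of_idem_mul_eq_neg alt1 tor2 he h

theorem idem_mul_commutator_eq_self (alt1 : ∀ x y : R, x * x * y = x * (x * y))
    (alt2 : ∀ x y : R, y * x * x = y * (x * x)) (tor2 : ∀ x : R, (2 : ℕ) • x = 0 → x = 0)
    (he : IsIdempotentElem e) {x d : R} (hex : e * x = x) (hxe : x * e = 0)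
    (hde : d * e = e * d) : e * (x * d - d * x) = x * d - d * x := by
  set v := e * d with hv
  set u := d - e * d with hu
  have hev : e * v = v := by rw [← alt1, he.eq]
  have hve : v * e = v := by rw [flexible_of_alternative alt1 alt2, hde, ← alt1, he.eq]
  have heu : e * u = 0 := by rw [mul_sub, hev, sub_self]
  have hue : u * e = 0 := by rw [sub_mul, hve, hde, sub_self]
  have hxd : x * d - d * x = x * u - v * x := by
    rw [show d = v + u by rw [hu, hv, add_sub_cancel], mul_add, add_mul,
      peirce₁₂_mul_peirce₁₁ alt2 tor2 he hxe hev hve,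
      peirce₂₂_mul_peirce₁₂ alt1 tor2 he heu hue hex]
    abel
  have hxu : e * (x * u) = x * u := by
    have h := mul_mul_add_mul_mul_swap_left alt1 e x u
    rwa [hex, hxe, zero_mul, heu, mul_zero, add_zero, add_zero, eq_comm] at h
  have hvx : e * (v * x) = v * x := by
    have h := mul_mul_add_mul_mul_swap_left alt1 e v x
    rwa [hev, hve, hex, add_left_inj, eq_comm] at h
  rw [hxd, mul_sub, hxu, hvx]

theorem one_sub_idem_mul_map_mul_idem_eq_zero (alt1 : ∀ x y : R, x * x * y = x * (x * y))
    (alt2 : ∀ x y : R, y * x * x = y * (x * x)) (tor2 : ∀ x : R, (2 : ℕ) • x = 0 → x = 0)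
    {φ : R → R} (hadd : ∀ x y : R, φ (x + y) = φ x + φ y) (hcomm : ∀ x : R, φ x * x = x * φ x)
    (he : IsIdempotentElem e) (a : R) :
    (1 - e) * (φ (e * (a * (1 - e))) * e) = 0 := by
  set x := e * (a * (1 - e))
  have hex : e * x = x := by rw [← alt1, he.eq]
  have hxe : x * e = 0 := by
    rw [flexible_of_alternative alt1 alt2, mul_sub, mul_one, sub_mul, alt2, he.eq, sub_self,
      mul_zero]
  have hfix := idem_mul_commutator_eq_self alt1 alt2 tor2 he hex hxe (hcomm e)
  rw [← sub_add_cancel (φ x * e) (e * φ x), commutator_map_left_eq_commutator_map_right hadd hcomm,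
    sub_mul, one_mul, sub_eq_zero, mul_add, hfix, ← alt1, he.eq]

end Alternative

theorem stmt9_general {R : Type*} [NonAssocRing R]
    (alt1 : ∀ x y : R, x * x * y = x * (x * y))
    (alt2 : ∀ x y : R, y * x * x = y * (x * x))
    (tor2 : ∀ x : R, (2 : ℕ) • x = 0 → x = 0)
    (e₁ : R) (he : e₁ * e₁ = e₁)
    (φ : R → R) (hadd : ∀ x y : R, φ (x + y) = φ x + φ y)
    (hcomm : ∀ x : R, φ x * x = x * φ x)
    :
    ∀ i j : Fin 2, i ≠ j → ∀ x ∈ peirceSet e₁ i j,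
      peirceE e₁ j * (φ x * peirceE e₁ i) = 0
    := by
  have he : IsIdempotentElem e₁ := he
  rintro i j hij x ⟨a, rfl⟩
  fin_cases i <;> fin_cases j
  · exact absurd rfl hij
  · exact one_sub_idem_mul_map_mul_idem_eq_zero alt1 alt2 tor2 hadd hcomm he a
  · have h := one_sub_idem_mul_map_mul_idem_eq_zero alt1 alt2 tor2 hadd hcomm he.one_sub a
    rw [sub_sub_cancel] at h
    exact h
  · exact absurd rfl hij

theorem stmt9 {R : Type*} [NonAssocRing R]
    (alt1 : ∀ x y : R, x * x * y = x * (x * y))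
    (alt2 : ∀ x y : R, y * x * x = y * (x * x))
    (tor2 : ∀ x : R, (2 : ℕ) • x = 0 → x = 0)
    (tor3 : ∀ x : R, (3 : ℕ) • x = 0 → x = 0)
    (e₁ : R) (he : e₁ * e₁ = e₁) (he0 : e₁ ≠ 0) (he1 : e₁ ≠ 1)
    (hd1 : ∀ x : R, (∀ r : R, x * r * e₁ = 0) → x = 0)
    (hd2 : ∀ x : R, (∀ r : R, x * r * (1 - e₁) = 0) → x = 0)
    (φ : R → R) (hadd : ∀ x y : R, φ (x + y) = φ x + φ y)
    (hcomm : ∀ x : R, φ x * x = x * φ x)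
    :
    ∀ i j : Fin 2, i ≠ j → ∀ x ∈ peirceSet e₁ i j,
      peirceE e₁ j * (φ x * peirceE e₁ i) = 0 :=
  stmt9_general alt1 alt2 tor2 e₁ he φ hadd hcomm
end

section
/- Let R be a unital 2- and 3-torsion free alternative ring with a nontrivial idempotent e_1, e_2 = 1 − e_1, satisfying: for each i ∈ {1,2}, if x ∈ R has (x r)e_i = 0 for all r ∈ R, then x = 0. Let φ : R → R be an additive commuting map. Then for all i ≠ j in {1,2} and every x_ij ∈ R_ij there exist z, z' ∈ Z(R) such that e_i φ(x_ij) e_i = z e_i and e_j φ(x_ij) e_j = z' e_j. -/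
/-!
Write `e = e₁` and let `R_ab` (`a, b ∈ {0, 1}`) be the Peirce space on which left and right
multiplication by `e` act as `a` and `b`, so that `R₁₀` is the paper's `R₁₂`. Linearizing
`[φ u, u] = 0` against `e` gives `φ u e - e φ u = u φ e - φ e u`; since `φ e` commutes with `e` it
lies in `R₁₁ + R₀₀`, so for `u ∈ R_ab` this element lies in `R_ab` again, which forces the
off-diagonal components of `φ u` not of type `ab` to vanish. In particular, for `x ∈ R₁₀`,
`φ x = A₁₁ + A₁₀ + A₀₀`. Comparing Peirce components in `[φ x, u] + [φ u, x] = 0` for `u` in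
`R₁₁`, `R₀₀`, `R₀₁` gives `A₁₁ u = u A₁₁`, `A₀₀ u = u A₀₀` and `A₀₀ u = u A₁₁`. For `y ∈ R₁₀`,
these relations and the Moufang identities give `(A₁₁ y - y A₀₀) R e = 0`, hence `A₁₁ y = y A₀₀`
by nondegeneracy. So `z = A₁₁ + A₀₀` is central, with `e φ(x) e = A₁₁ = z e` and
`(1 - e) φ(x) (1 - e) = A₀₀ = z (1 - e)`. For `x ∈ R₂₁` exchange `e₁` and `1 - e₁`.
-/

class IsAlternative (R : Type*) [NonUnitalNonAssocRing R] : Prop where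
  mul_self_mul (x y : R) : x * x * y = x * (x * y)
  mul_mul_self (x y : R) : y * x * x = y * (x * x)

namespace IsAlternative

variable {R : Type*} [NonUnitalNonAssocRing R] [IsAlternative R]

theorem associator_self_left (x y : R) : associator x x y = 0 := by
  rw [associator_apply, mul_self_mul, sub_self]

theorem associator_self_right (x y : R) : associator y x x = 0 := by
  rw [associator_apply, mul_mul_self, sub_self]

theorem associator_swap_left (x y z : R) : associator y x z = -associator x y z := by
  have h := associator_self_left (x + y) z
  simp only [associator_apply, add_mul, mul_add, mul_self_mul] at h ⊢
  linear_combination (norm := abel1) h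

theorem associator_swap_right (x y z : R) : associator x z y = -associator x y z := by
  have h := associator_self_right (y + z) x
  simp only [associator_apply, add_mul, mul_add, mul_mul_self] at h ⊢
  linear_combination (norm := abel1) h

theorem associator_cyclic (x y z : R) : associator y z x = associator x y z := by
  rw [associator_swap_right, associator_swap_left, neg_neg]

theorem associator_self_middle (x y : R) : associator x y x = 0 := by
  rw [← associator_cyclic, associator_self_right]

theorem flexible (x y : R) : x * y * x = x * (y * x) :=
  sub_eq_zero.mp (associator_self_middle x y)

theorem associator_mul_self_middle (h2 : ∀ x : R, (2 : ℕ) • x = 0 → x = 0) (a b c : R) :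
    associator a (b * a) c = a * associator a b c := by
  have t1 := associator_cocycle a a b c
  have t2 := associator_cocycle b a a c
  have t3 := associator_cocycle a b a c
  rw [associator_self_left a b, associator_self_left a (b * c)] at t1
  rw [associator_self_left a c, associator_self_right a b, associator_swap_left a (b * a) c,
    associator_swap_left (a * a) b c, associator_swap_left a b (a * c)] at t2
  rw [associator_self_middle a b, associator_swap_left a b c,
    associator_swap_left a (a * b) c] at t3
  simp only [mul_zero, zero_mul, mul_neg] at t1 t2 t3
  refine sub_eq_zero.mp (h2 _ ?_)
  rw [two_nsmul]
  linear_combination (norm := abel1) t2 + t3 - t1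

theorem associator_mul_self_right (h2 : ∀ x : R, (2 : ℕ) • x = 0 → x = 0) (a b c : R) :
    associator c (a * b) a + associator c a b * a = 0 := by
  have u1 := associator_cocycle c a b a
  have u2 := associator_cocycle c b a a
  have u3 := associator_cocycle c a a b
  rw [associator_self_middle a b] at u1
  rw [associator_self_right a b, associator_self_right a (c * b), associator_swap_right c a (b * a),
    associator_swap_right c (a * a) b, associator_swap_right c a b] at u2
  rw [associator_self_left a b, associator_self_right a c, associator_swap_right (c * a) b a,
    associator_swap_right c (a * b) a] at u3
  simp only [mul_zero, zero_mul, neg_mul] at u1 u2 u3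
  refine h2 _ ?_
  rw [two_nsmul]
  linear_combination (norm := abel1) u1 + u3 - u2

theorem moufang_right (h2 : ∀ x : R, (2 : ℕ) • x = 0 → x = 0) (c a b : R) :
    c * a * b * a = c * (a * b * a) := by
  have u := associator_cocycle c a b a
  have k := associator_mul_self_right h2 a b c
  rw [associator_self_middle, mul_zero] at u
  simp only [associator_apply, sub_mul, flexible a b] at u k ⊢
  linear_combination (norm := abel1) -u + k

theorem moufang_middle (h2 : ∀ x : R, (2 : ℕ) • x = 0 → x = 0) (a b c : R) :
    a * b * (c * a) = a * (b * c * a) := by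
  have key : associator a b (c * a) = a * associator b c a := by
    rw [associator_swap_right a (c * a) b, associator_mul_self_middle h2,
      associator_swap_right a b c, associator_cyclic a b c, mul_neg, neg_neg]
  simp only [associator_apply, mul_sub] at key
  linear_combination (norm := abel1) key

theorem moufang_right_linear (h2 : ∀ x : R, (2 : ℕ) • x = 0 → x = 0) (c a b d : R) :
    c * a * b * d + c * d * b * a = c * (a * b * d) + c * (d * b * a) := by
  have h := moufang_right h2 c (a + d) b
  simp only [mul_add, add_mul] at h
  linear_combination (norm := abel1) h - moufang_right h2 c a b - moufang_right h2 c d b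

theorem moufang_middle_linear (h2 : ∀ x : R, (2 : ℕ) • x = 0 → x = 0) (a b c d : R) :
    a * b * (c * d) + d * b * (c * a) = a * (b * c * d) + d * (b * c * a) := by
  have h := moufang_middle h2 (a + d) b c
  simp only [mul_add, add_mul] at h
  linear_combination (norm := abel1) h - moufang_middle h2 a b c - moufang_middle h2 d b c

end IsAlternative

open IsAlternative

/-- Integer eigenvalues, rather than `a, b ∈ {0, 1}`, let products of Peirce components be
handled uniformly by `IsPeirce.mul`. -/
def IsPeirce {R : Type*} [NonUnitalNonAssocRing R] (e : R) (a b : ℤ) (u : R) : Prop :=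
  e * u = a • u ∧ u * e = b • u

namespace IsPeirce

section NonAssocRing

variable {R : Type*} [NonAssocRing R] {e u v : R} {a b : ℤ}

theorem add (hu : IsPeirce e a b u) (hv : IsPeirce e a b v) : IsPeirce e a b (u + v) := by
  simp only [IsPeirce, mul_add, add_mul, smul_add, hu.1, hu.2, hv.1, hv.2, and_self]

theorem sub (hu : IsPeirce e a b u) (hv : IsPeirce e a b v) : IsPeirce e a b (u - v) := by
  simp only [IsPeirce, mul_sub, sub_mul, smul_sub, hu.1, hu.2, hv.1, hv.2, and_self]

theorem one_sub (hu : IsPeirce e a b u) : IsPeirce (1 - e) (1 - a) (1 - b) u := by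
  simp only [IsPeirce, sub_mul, mul_sub, one_mul, mul_one, sub_smul, one_smul, hu.1, hu.2,
    and_self]

theorem mul_mul_eq_smul (hu : IsPeirce e a b u) : e * (u * e) = (a * b) • u := by
  rw [hu.2, mul_smul_comm, hu.1, mul_comm, mul_smul]

end NonAssocRing

variable {R : Type*} [NonAssocRing R] [IsAlternative R] {e u v t : R} {a b c d : ℤ}

theorem mul (hu : IsPeirce e a b u) (hv : IsPeirce e c d v) :
    IsPeirce e (a + b - c) (d - b + c) (u * v) := by
  have hl := associator_swap_left u e v
  have hr := associator_swap_right u e v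
  simp only [associator_apply, hu.1, hu.2, hv.1, hv.2, smul_mul_assoc, mul_smul_comm] at hl hr
  constructor
  · rw [add_sub_assoc, add_smul, sub_smul]
    linear_combination (norm := abel1) -hl
  · rw [add_smul, sub_smul]
    linear_combination (norm := abel1) hr

/-- The eigenvalues `-1` and `2` arise for products of Peirce components; since `e (e u) = e u`
they force `2 • u = 0`. -/
theorem eq_zero (he : IsIdempotentElem e) (h2 : ∀ x : R, (2 : ℕ) • x = 0 → x = 0)
    (hu : IsPeirce e a b u) (hab : a = -1 ∨ a = 2 ∨ b = -1 ∨ b = 2) : u = 0 := by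
  have key : ∀ k : ℤ, k = -1 ∨ k = 2 → k • k • u = k • u → u = 0 := by
    rintro k hk hkk
    refine h2 u ?_
    rw [← natCast_zsmul, ← sub_eq_zero.mpr hkk, ← mul_smul, ← sub_smul]
    rcases hk with rfl | rfl <;> norm_num
  have hl : a • a • u = a • u := by
    rw [← hu.1, ← mul_smul_comm, ← hu.1, ← mul_self_mul, he.eq]
  have hr : b • b • u = b • u := by
    rw [← hu.2, ← smul_mul_assoc, ← hu.2, mul_mul_self, he.eq]
  rcases hab with ha | ha | hb | hb
  exacts [key a (.inl ha) hl, key a (.inr ha) hl, key b (.inl hb) hr, key b (.inr hb) hr]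

end IsPeirce

section Decomposition

theorem peirce_decomposition {R : Type*} [NonAssocRing R] (e t : R) :
    t = e * (t * e) + (e * t - e * (t * e)) + (t * e - e * (t * e)) + (1 - e) * (t * (1 - e)) := by
  simp only [mul_sub, sub_mul, one_mul, mul_one]
  abel

variable {R : Type*} [NonAssocRing R] [IsAlternative R] {e u t : R} {a b : ℤ}

theorem isPeirce_one_one (he : IsIdempotentElem e) (t : R) : IsPeirce e 1 1 (e * (t * e)) := by
  constructor
  · rw [one_smul, ← mul_self_mul, he.eq]
  · rw [one_smul, flexible, mul_mul_self, he.eq]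

theorem isPeirce_one_zero (he : IsIdempotentElem e) (t : R) :
    IsPeirce e 1 0 (e * t - e * (t * e)) := by
  constructor
  · rw [one_smul, mul_sub, ← mul_self_mul, ← mul_self_mul, he.eq]
  · rw [zero_smul, sub_mul, flexible, flexible, mul_mul_self, he.eq, sub_self]

theorem isPeirce_zero_one (he : IsIdempotentElem e) (t : R) :
    IsPeirce e 0 1 (t * e - e * (t * e)) := by
  constructor
  · rw [zero_smul, mul_sub, ← mul_self_mul, he.eq, sub_self]
  · rw [one_smul, sub_mul, flexible, mul_mul_self, he.eq]

theorem isPeirce_zero_zero (he : IsIdempotentElem e) (t : R) :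
    IsPeirce e 0 0 ((1 - e) * (t * (1 - e))) := by
  simpa using (isPeirce_one_one he.one_sub t).one_sub

theorem exists_peirce_decomposition (he : IsIdempotentElem e) (t : R) :
    ∃ t₁₁ t₁₀ t₀₁ t₀₀, t = t₁₁ + t₁₀ + t₀₁ + t₀₀ ∧ IsPeirce e 1 1 t₁₁ ∧ IsPeirce e 1 0 t₁₀ ∧
      IsPeirce e 0 1 t₀₁ ∧ IsPeirce e 0 0 t₀₀ :=
  ⟨_, _, _, _, peirce_decomposition e t, isPeirce_one_one he t, isPeirce_one_zero he t,
    isPeirce_zero_one he t, isPeirce_zero_zero he t⟩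

theorem peirce_decomposition_of_commute (he : IsIdempotentElem e) (ht : t * e = e * t) :
    t = e * (t * e) + (1 - e) * (t * (1 - e)) := by
  have h : e * (t * e) = e * t := by rw [ht, ← mul_self_mul, he.eq]
  linear_combination (norm := abel1) peirce_decomposition e t - h - h + ht

theorem IsPeirce.mul_left_of_commute (he : IsIdempotentElem e)
    (h2 : ∀ x : R, (2 : ℕ) • x = 0 → x = 0)
    (ht : t * e = e * t) (hu : IsPeirce e a b u) (ha : a = 0 ∨ a = 1) :
    IsPeirce e a b (t * u) := by
  rw [peirce_decomposition_of_commute he ht, add_mul]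
  have h₁₁ := (isPeirce_one_one he t).mul hu
  have h₀₀ := (isPeirce_zero_zero he t).mul hu
  rcases ha with rfl | rfl
  · rw [h₁₁.eq_zero he h2 (by norm_num), zero_add]
    simpa using h₀₀
  · rw [h₀₀.eq_zero he h2 (by norm_num), add_zero]
    simpa using h₁₁

theorem IsPeirce.mul_right_of_commute (he : IsIdempotentElem e)
    (h2 : ∀ x : R, (2 : ℕ) • x = 0 → x = 0)
    (ht : t * e = e * t) (hu : IsPeirce e a b u) (hb : b = 0 ∨ b = 1) :
    IsPeirce e a b (u * t) := by
  rw [peirce_decomposition_of_commute he ht, mul_add]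
  have h₁₁ := hu.mul (isPeirce_one_one he t)
  have h₀₀ := hu.mul (isPeirce_zero_zero he t)
  rcases hb with rfl | rfl
  · rw [h₁₁.eq_zero he h2 (by norm_num), zero_add]
    simpa using h₀₀
  · rw [h₀₀.eq_zero he h2 (by norm_num), add_zero]
    simpa using h₁₁

end Decomposition

section PeirceAssociativity

variable {R : Type*} [NonAssocRing R] [IsAlternative R] {e u p w y y' : R}

theorem IsPeirce.mul_self_eq_zero (hy : IsPeirce e 1 0 y) : y * y = 0 := by
  simpa [hy.1, hy.2] using (flexible y e).symm

theorem IsPeirce.mul_eq_neg_mul (hy : IsPeirce e 1 0 y) (hy' : IsPeirce e 1 0 y') :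
    y * y' = -(y' * y) := by
  have h := (hy.add hy').mul_self_eq_zero
  simp only [add_mul, mul_add, hy.mul_self_eq_zero, hy'.mul_self_eq_zero] at h
  linear_combination (norm := abel1) h

theorem IsPeirce.associator_eq_zero (he : IsIdempotentElem e)
    (h2 : ∀ x : R, (2 : ℕ) • x = 0 → x = 0) (hu : IsPeirce e 1 1 u) (hy : IsPeirce e 1 0 y)
    (hw : IsPeirce e 0 1 w) : associator u y w = 0 := by
  have h := moufang_right_linear h2 u e y w
  simp only [hu.2, hy.1, (hw.mul hy).2, (hu.mul hw).eq_zero he h2 (by norm_num)] at h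
  norm_num at h
  rw [associator_apply, h, sub_self]

theorem IsPeirce.associator_eq_zero_of_zero_zero (he : IsIdempotentElem e)
    (h2 : ∀ x : R, (2 : ℕ) • x = 0 → x = 0) (hy : IsPeirce e 1 0 y) (hp : IsPeirce e 0 0 p)
    (hw : IsPeirce e 0 1 w) : associator y p w = 0 := by
  have h := hp.one_sub.associator_eq_zero he.one_sub h2 (by simpa using hw.one_sub)
    (by simpa using hy.one_sub)
  rwa [← associator_cyclic, ← associator_cyclic] at h

theorem IsPeirce.mul_mul_eq_of_one_one (h2 : ∀ x : R, (2 : ℕ) • x = 0 → x = 0)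
    (hu : IsPeirce e 1 1 u) (hy : IsPeirce e 1 0 y)
    (hy' : IsPeirce e 1 0 y') : u * y * y' = y * y' * u := by
  have h := moufang_middle_linear h2 u y y' (1 - e)
  simp only [hy'.one_sub.2, hy.one_sub.1, (hy.mul hy').one_sub.2,
    ((hy.mul hy').mul hu).one_sub.1] at h
  norm_num at h
  exact h

theorem IsPeirce.mul_mul_eq_of_zero_zero (he : IsIdempotentElem e)
    (h2 : ∀ x : R, (2 : ℕ) • x = 0 → x = 0) (hy : IsPeirce e 1 0 y) (hp : IsPeirce e 0 0 p)
    (hy' : IsPeirce e 1 0 y') : y * p * y' = p * (y * y') := by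
  have h := moufang_middle_linear h2 (1 - e) p y' y
  simp only [hp.one_sub.1, hy'.one_sub.2, (hp.mul hy').eq_zero he h2 (by norm_num),
    hy'.mul_eq_neg_mul hy] at h
  norm_num at h
  linear_combination (norm := abel1) h

end PeirceAssociativity

theorem commute_add_of_isPeirce {R : Type*} [NonAssocRing R] [IsAlternative R] {e A₁₁ A₀₀ : R}
    (he : IsIdempotentElem e) (h2 : ∀ x : R, (2 : ℕ) • x = 0 → x = 0)
    (hA₁₁ : IsPeirce e 1 1 A₁₁) (hA₀₀ : IsPeirce e 0 0 A₀₀)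
    (h₁₁ : ∀ u, IsPeirce e 1 1 u → A₁₁ * u = u * A₁₁)
    (h₁₀ : ∀ y, IsPeirce e 1 0 y → A₁₁ * y = y * A₀₀)
    (h₀₁ : ∀ w, IsPeirce e 0 1 w → A₀₀ * w = w * A₁₁)
    (h₀₀ : ∀ p, IsPeirce e 0 0 p → A₀₀ * p = p * A₀₀) (r : R) :
    (A₁₁ + A₀₀) * r = r * (A₁₁ + A₀₀) := by
  obtain ⟨r₁₁, r₁₀, r₀₁, r₀₀, rfl, hr₁₁, hr₁₀, hr₀₁, hr₀₀⟩ := exists_peirce_decomposition he r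
  simp only [add_mul, mul_add, h₁₁ r₁₁ hr₁₁, h₁₀ r₁₀ hr₁₀, h₀₁ r₀₁ hr₀₁, h₀₀ r₀₀ hr₀₀,
    (hA₀₀.mul hr₁₁).eq_zero he h2 (by norm_num), (hr₁₁.mul hA₀₀).eq_zero he h2 (by norm_num),
    (hA₀₀.mul hr₁₀).eq_zero he h2 (by norm_num), (hr₁₀.mul hA₁₁).eq_zero he h2 (by norm_num),
    (hA₁₁.mul hr₀₁).eq_zero he h2 (by norm_num), (hr₀₁.mul hA₀₀).eq_zero he h2 (by norm_num),
    (hA₁₁.mul hr₀₀).eq_zero he h2 (by norm_num), (hr₀₀.mul hA₁₁).eq_zero he h2 (by norm_num)]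
  abel

section Nondegenerate

variable {R : Type*} [NonAssocRing R] [IsAlternative R] {e A₁₁ A₀₀ y : R}

theorem mul_sub_mul_mul_eq_zero_of_zero_one (he : IsIdempotentElem e)
    (h2 : ∀ x : R, (2 : ℕ) • x = 0 → x = 0) (hA₁₁ : IsPeirce e 1 1 A₁₁)
    (hA₀₀ : IsPeirce e 0 0 A₀₀) (h₁₁ : ∀ u, IsPeirce e 1 1 u → A₁₁ * u = u * A₁₁)
    (h₀₁ : ∀ w, IsPeirce e 0 1 w → A₀₀ * w = w * A₁₁) (hy : IsPeirce e 1 0 y) {w : R}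
    (hw : IsPeirce e 0 1 w) : (A₁₁ * y - y * A₀₀) * w = 0 := by
  have hassoc := hA₁₁.associator_eq_zero he h2 hy hw
  have h₁ : A₁₁ * y * w = y * (w * A₁₁) :=
    calc A₁₁ * y * w = A₁₁ * (y * w) := sub_eq_zero.mp hassoc
      _ = y * w * A₁₁ := h₁₁ _ (by simpa using hy.mul hw)
      _ = y * (w * A₁₁) := sub_eq_zero.mp ((associator_cyclic A₁₁ y w).trans hassoc)
  have h₂ : y * A₀₀ * w = y * (w * A₁₁) := by
    rw [sub_eq_zero.mp (hy.associator_eq_zero_of_zero_zero he h2 hA₀₀ hw), h₀₁ w hw]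
  rw [sub_mul, h₁, h₂, sub_self]

theorem mul_sub_mul_mul_eq_zero_of_one_zero (he : IsIdempotentElem e)
    (h2 : ∀ x : R, (2 : ℕ) • x = 0 → x = 0) (hA₁₁ : IsPeirce e 1 1 A₁₁)
    (hA₀₀ : IsPeirce e 0 0 A₀₀) (h₀₁ : ∀ w, IsPeirce e 0 1 w → A₀₀ * w = w * A₁₁)
    (hy : IsPeirce e 1 0 y) {y' : R} (hy' : IsPeirce e 1 0 y') :
    (A₁₁ * y - y * A₀₀) * y' = 0 := by
  rw [sub_mul, hA₁₁.mul_mul_eq_of_one_one h2 hy hy', hy.mul_mul_eq_of_zero_zero he h2 hA₀₀ hy',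
    h₀₁ _ (by simpa using hy.mul hy'), sub_self]

theorem mul_eq_mul_of_isPeirce_one_zero (he : IsIdempotentElem e)
    (h2 : ∀ x : R, (2 : ℕ) • x = 0 → x = 0) (hd : ∀ t : R, (∀ r : R, t * r * e = 0) → t = 0)
    (hA₁₁ : IsPeirce e 1 1 A₁₁) (hA₀₀ : IsPeirce e 0 0 A₀₀)
    (h₁₁ : ∀ u, IsPeirce e 1 1 u → A₁₁ * u = u * A₁₁)
    (h₀₁ : ∀ w, IsPeirce e 0 1 w → A₀₀ * w = w * A₁₁) (hy : IsPeirce e 1 0 y) :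
    A₁₁ * y = y * A₀₀ := by
  have hT : IsPeirce e 1 0 (A₁₁ * y - y * A₀₀) :=
    (by simpa using hA₁₁.mul hy : IsPeirce e 1 0 _).sub (by simpa using hy.mul hA₀₀)
  refine sub_eq_zero.mp (hd _ fun r => ?_)
  obtain ⟨r₁₁, r₁₀, r₀₁, r₀₀, rfl, hr₁₁, hr₁₀, hr₀₁, hr₀₀⟩ := exists_peirce_decomposition he r
  simp only [mul_add, add_mul, (hT.mul hr₁₁).eq_zero he h2 (by norm_num), (hT.mul hr₀₀).2,
    mul_sub_mul_mul_eq_zero_of_one_zero he h2 hA₁₁ hA₀₀ h₀₁ hy hr₁₀,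
    mul_sub_mul_mul_eq_zero_of_zero_one he h2 hA₁₁ hA₀₀ h₁₁ h₀₁ hy hr₀₁]
  norm_num

end Nondegenerate

theorem commuting_linear {R : Type*} [NonUnitalNonAssocRing R] {φ : R →+ R}
    (hφ : ∀ x, φ x * x = x * φ x) (u v : R) : φ u * v + φ v * u = u * φ v + v * φ u := by
  have h := hφ (u + v)
  simp only [map_add, add_mul, mul_add] at h
  linear_combination (norm := abel1) h - hφ u - hφ v

section CommutingMap

variable {R : Type*} [NonAssocRing R] [IsAlternative R] {e u : R} {a b : ℤ} {φ : R →+ R}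

variable (he : IsIdempotentElem e) (h2 : ∀ x : R, (2 : ℕ) • x = 0 → x = 0)
  (hφ : ∀ x, φ x * x = x * φ x)
include he h2 hφ

theorem IsPeirce.apply_mul_sub_mul_apply (hu : IsPeirce e a b u) (ha : a = 0 ∨ a = 1)
    (hb : b = 0 ∨ b = 1) : IsPeirce e a b (φ u * e - e * φ u) := by
  have h : φ u * e - e * φ u = u * φ e - φ e * u := by
    linear_combination (norm := abel1) commuting_linear hφ u e
  rw [h]
  exact (hu.mul_right_of_commute he h2 (hφ e) hb).sub (hu.mul_left_of_commute he h2 (hφ e) ha)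

theorem IsPeirce.mul_apply_eq (hu : IsPeirce e a b u) (ha : a = 0 ∨ a = 1) (hb : b = 0 ∨ b = 1)
    (h : a = 0 ∨ b = 1) : e * φ u = e * (φ u * e) := by
  obtain ⟨hl, hr⟩ := hu.apply_mul_sub_mul_apply he h2 hφ ha hb
  rw [mul_sub, ← mul_self_mul, he.eq] at hl
  rw [sub_mul, mul_mul_self, he.eq, flexible] at hr
  rcases h with rfl | rfl
  · rw [zero_smul, sub_eq_zero] at hl
    exact hl.symm
  · rw [one_smul] at hr
    linear_combination (norm := abel1) hr

theorem IsPeirce.apply_mul_eq (hu : IsPeirce e a b u) (ha : a = 0 ∨ a = 1) (hb : b = 0 ∨ b = 1)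
    (h : a = 1 ∨ b = 0) : φ u * e = e * (φ u * e) := by
  obtain ⟨hl, hr⟩ := hu.apply_mul_sub_mul_apply he h2 hφ ha hb
  rw [mul_sub, ← mul_self_mul, he.eq] at hl
  rw [sub_mul, mul_mul_self, he.eq, flexible] at hr
  rcases h with rfl | rfl
  · rw [one_smul] at hl
    linear_combination (norm := abel1) -hl
  · rw [zero_smul, sub_eq_zero] at hr
    exact hr

theorem IsPeirce.exists_apply_eq_add_of_diag (hu : IsPeirce e a a u) (ha : a = 0 ∨ a = 1) :
    ∃ C₁₁ C₀₀, φ u = C₁₁ + C₀₀ ∧ IsPeirce e 1 1 C₁₁ ∧ IsPeirce e 0 0 C₀₀ := by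
  have hl := hu.mul_apply_eq he h2 hφ ha ha ha
  have hr := hu.apply_mul_eq he h2 hφ ha ha ha.symm
  exact ⟨_, _, peirce_decomposition_of_commute he (hr.trans hl.symm), isPeirce_one_one he _,
    isPeirce_zero_zero he _⟩

theorem IsPeirce.exists_apply_eq_add_of_one_zero (hu : IsPeirce e 1 0 u) :
    ∃ C₁₁ C₁₀ C₀₀, φ u = C₁₁ + C₁₀ + C₀₀ ∧ IsPeirce e 1 1 C₁₁ ∧ IsPeirce e 1 0 C₁₀ ∧
      IsPeirce e 0 0 C₀₀ := by
  have h := hu.apply_mul_eq he h2 hφ (.inr rfl) (.inl rfl) (.inl rfl)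
  refine ⟨_, _, _, ?_, isPeirce_one_one he (φ u),
    isPeirce_one_zero he (φ u), isPeirce_zero_zero he (φ u)⟩
  linear_combination (norm := abel1) peirce_decomposition e (φ u) + h

theorem IsPeirce.exists_apply_eq_add_of_zero_one (hu : IsPeirce e 0 1 u) :
    ∃ C₁₁ C₀₁ C₀₀, φ u = C₁₁ + C₀₁ + C₀₀ ∧ IsPeirce e 1 1 C₁₁ ∧ IsPeirce e 0 1 C₀₁ ∧
      IsPeirce e 0 0 C₀₀ := by
  have h := hu.mul_apply_eq he h2 hφ (.inl rfl) (.inr rfl) (.inl rfl)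
  refine ⟨_, _, _, ?_, isPeirce_one_one he (φ u),
    isPeirce_zero_one he (φ u), isPeirce_zero_zero he (φ u)⟩
  linear_combination (norm := abel1) peirce_decomposition e (φ u) + h

variable {x A₁₁ A₁₀ A₀₀ : R} (hx : IsPeirce e 1 0 x) (hA₁₁ : IsPeirce e 1 1 A₁₁)
  (hA₁₀ : IsPeirce e 1 0 A₁₀) (hA₀₀ : IsPeirce e 0 0 A₀₀) (hφx : φ x = A₁₁ + A₁₀ + A₀₀)
include hx hA₁₁ hA₁₀ hA₀₀ hφx

theorem commute_of_isPeirce_one_one (hu : IsPeirce e 1 1 u) : A₁₁ * u = u * A₁₁ := by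
  obtain ⟨C₁₁, C₀₀, hφu, hC₁₁, hC₀₀⟩ := hu.exists_apply_eq_add_of_diag he h2 hφ (.inr rfl)
  have hlin := commuting_linear hφ x u
  rw [hφx, hφu] at hlin
  simp only [add_mul, mul_add, (hA₁₀.mul hu).eq_zero he h2 (by norm_num),
    (hA₀₀.mul hu).eq_zero he h2 (by norm_num), (hC₀₀.mul hx).eq_zero he h2 (by norm_num),
    (hx.mul hC₁₁).eq_zero he h2 (by norm_num), (hu.mul hA₀₀).eq_zero he h2 (by norm_num),
    add_zero, zero_add] at hlin
  -- the `R₁₁`-components of both sides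
  have hproj := congrArg (fun t => e * (t * e)) hlin
  simp only [mul_add, add_mul, (hA₁₁.mul hu).mul_mul_eq_smul, (hC₁₁.mul hx).mul_mul_eq_smul,
    (hx.mul hC₀₀).mul_mul_eq_smul, (hu.mul hA₁₁).mul_mul_eq_smul,
    (hu.mul hA₁₀).mul_mul_eq_smul] at hproj
  norm_num at hproj
  exact hproj

theorem commute_of_isPeirce_zero_zero {p : R} (hp : IsPeirce e 0 0 p) : A₀₀ * p = p * A₀₀ := by
  obtain ⟨C₁₁, C₀₀, hφp, hC₁₁, hC₀₀⟩ := hp.exists_apply_eq_add_of_diag he h2 hφ (.inl rfl)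
  have hlin := commuting_linear hφ x p
  rw [hφx, hφp] at hlin
  simp only [add_mul, mul_add, (hA₁₁.mul hp).eq_zero he h2 (by norm_num),
    (hC₀₀.mul hx).eq_zero he h2 (by norm_num), (hx.mul hC₁₁).eq_zero he h2 (by norm_num),
    (hp.mul hA₁₁).eq_zero he h2 (by norm_num), (hp.mul hA₁₀).eq_zero he h2 (by norm_num),
    add_zero, zero_add] at hlin
  -- the `R₀₀`-components of both sides
  have hproj := congrArg (fun t => (1 - e) * (t * (1 - e))) hlin
  simp only [mul_add, add_mul, (hA₁₀.mul hp).one_sub.mul_mul_eq_smul,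
    (hA₀₀.mul hp).one_sub.mul_mul_eq_smul, (hC₁₁.mul hx).one_sub.mul_mul_eq_smul,
    (hx.mul hC₀₀).one_sub.mul_mul_eq_smul, (hp.mul hA₀₀).one_sub.mul_mul_eq_smul] at hproj
  norm_num at hproj
  exact hproj

theorem mul_eq_mul_of_isPeirce_zero_one {w : R} (hw : IsPeirce e 0 1 w) :
    A₀₀ * w = w * A₁₁ := by
  obtain ⟨C₁₁, C₀₁, C₀₀, hφw, hC₁₁, hC₀₁, hC₀₀⟩ := hw.exists_apply_eq_add_of_zero_one he h2 hφ
  have hlin := commuting_linear hφ x w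
  rw [hφx, hφw] at hlin
  simp only [add_mul, mul_add, (hA₁₁.mul hw).eq_zero he h2 (by norm_num),
    (hC₀₀.mul hx).eq_zero he h2 (by norm_num), (hx.mul hC₁₁).eq_zero he h2 (by norm_num),
    (hw.mul hA₀₀).eq_zero he h2 (by norm_num), add_zero, zero_add] at hlin
  -- the `R₀₁`-components of both sides
  have hproj := congrArg (fun t => t * e - e * (t * e)) hlin
  simp only [add_mul, mul_add, mul_smul_comm, smul_smul,
    (hA₁₀.mul hw).1, (hA₁₀.mul hw).2, (hA₀₀.mul hw).1, (hA₀₀.mul hw).2,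
    (hC₁₁.mul hx).1, (hC₁₁.mul hx).2, (hC₀₁.mul hx).1, (hC₀₁.mul hx).2,
    (hx.mul hC₀₁).1, (hx.mul hC₀₁).2, (hx.mul hC₀₀).1, (hx.mul hC₀₀).2,
    (hw.mul hA₁₁).1, (hw.mul hA₁₁).2, (hw.mul hA₁₀).1, (hw.mul hA₁₀).2] at hproj
  norm_num at hproj
  exact hproj

end CommutingMap

theorem exists_central_of_isPeirce_one_zero {R : Type*} [NonAssocRing R] [IsAlternative R]
    {e x : R} {φ : R →+ R} (he : IsIdempotentElem e) (h2 : ∀ x : R, (2 : ℕ) • x = 0 → x = 0)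
    (hd : ∀ t : R, (∀ r : R, t * r * e = 0) → t = 0) (hφ : ∀ x, φ x * x = x * φ x)
    (hx : IsPeirce e 1 0 x) :
    ∃ z : R, (∀ r : R, z * r = r * z) ∧
      e * (φ x * e) = z * e ∧ (1 - e) * (φ x * (1 - e)) = z * (1 - e) := by
  obtain ⟨A₁₁, A₁₀, A₀₀, hφx, hA₁₁, hA₁₀, hA₀₀⟩ := hx.exists_apply_eq_add_of_one_zero he h2 hφ
  have h₁₁ := fun u (hu : IsPeirce e 1 1 u) =>
    commute_of_isPeirce_one_one he h2 hφ hx hA₁₁ hA₁₀ hA₀₀ hφx hu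
  have h₀₀ := fun p (hp : IsPeirce e 0 0 p) =>
    commute_of_isPeirce_zero_zero he h2 hφ hx hA₁₁ hA₁₀ hA₀₀ hφx hp
  have h₀₁ := fun w (hw : IsPeirce e 0 1 w) =>
    mul_eq_mul_of_isPeirce_zero_one he h2 hφ hx hA₁₁ hA₁₀ hA₀₀ hφx hw
  have h₁₀ := fun y (hy : IsPeirce e 1 0 y) =>
    mul_eq_mul_of_isPeirce_one_zero he h2 hd hA₁₁ hA₀₀ h₁₁ h₀₁ hy
  refine ⟨A₁₁ + A₀₀, commute_add_of_isPeirce he h2 hA₁₁ hA₀₀ h₁₁ h₁₀ h₀₁ h₀₀, ?_, ?_⟩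
  · simp only [hφx, add_mul, mul_add, hA₁₁.mul_mul_eq_smul, hA₁₀.mul_mul_eq_smul,
      hA₀₀.mul_mul_eq_smul]
    simp [hA₁₁.2, hA₀₀.2]
  · simp only [hφx, add_mul, mul_add, hA₁₁.one_sub.mul_mul_eq_smul,
      hA₁₀.one_sub.mul_mul_eq_smul, hA₀₀.one_sub.mul_mul_eq_smul]
    simp [hA₁₁.one_sub.2, hA₀₀.one_sub.2]

theorem isPeirce_one_zero_of_mem_peirceSet {R : Type*} [NonAssocRing R] [IsAlternative R]
    {e x : R} (he : IsIdempotentElem e) (hx : x ∈ peirceSet e 0 1) : IsPeirce e 1 0 x := by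
  obtain ⟨a, rfl⟩ := hx
  simpa [peirceE, mul_sub] using isPeirce_one_zero he a

theorem peirceSet_one_sub {R : Type*} [NonAssocRing R] (e : R) :
    peirceSet (1 - e) 0 1 = peirceSet e 1 0 := by
  simp [peirceSet, peirceE]

theorem stmt12_general {R : Type*} [NonAssocRing R]
    (alt1 : ∀ x y : R, x * x * y = x * (x * y))
    (alt2 : ∀ x y : R, y * x * x = y * (x * x))
    (tor2 : ∀ x : R, (2 : ℕ) • x = 0 → x = 0)
    (e₁ : R) (he : e₁ * e₁ = e₁)
    (hd1 : ∀ x : R, (∀ r : R, x * r * e₁ = 0) → x = 0)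
    (hd2 : ∀ x : R, (∀ r : R, x * r * (1 - e₁) = 0) → x = 0)
    (φ : R → R) (hadd : ∀ x y : R, φ (x + y) = φ x + φ y)
    (hcomm : ∀ x : R, φ x * x = x * φ x)
    :
    ∀ i j : Fin 2, i ≠ j → ∀ x ∈ peirceSet e₁ i j,
      ∃ z z' : R, (∀ r : R, z * r = r * z) ∧ (∀ r : R, z' * r = r * z') ∧
        peirceE e₁ i * (φ x * peirceE e₁ i) = z * peirceE e₁ i ∧
        peirceE e₁ j * (φ x * peirceE e₁ j) = z' * peirceE e₁ j
    := by
  have : IsAlternative R := ⟨alt1, alt2⟩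
  have he₁ : IsIdempotentElem e₁ := he
  intro i j hij x hx
  obtain ⟨rfl, rfl⟩ | ⟨rfl, rfl⟩ : i = 0 ∧ j = 1 ∨ i = 1 ∧ j = 0 := by omega
  · obtain ⟨z, hz, h₁, h₂⟩ := exists_central_of_isPeirce_one_zero (φ := .mk' φ hadd) he₁ tor2
      hd1 hcomm (isPeirce_one_zero_of_mem_peirceSet he₁ hx)
    exact ⟨z, z, hz, hz, by simpa [peirceE] using h₁, by simpa [peirceE] using h₂⟩
  · rw [← peirceSet_one_sub] at hx
    obtain ⟨z, hz, h₁, h₂⟩ := exists_central_of_isPeirce_one_zero (φ := .mk' φ hadd)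
      he₁.one_sub tor2 hd2 hcomm (isPeirce_one_zero_of_mem_peirceSet he₁.one_sub hx)
    exact ⟨z, z, hz, hz, by simpa [peirceE] using h₁, by simpa [peirceE] using h₂⟩

theorem stmt12 {R : Type*} [NonAssocRing R]
    (alt1 : ∀ x y : R, x * x * y = x * (x * y))
    (alt2 : ∀ x y : R, y * x * x = y * (x * x))
    (tor2 : ∀ x : R, (2 : ℕ) • x = 0 → x = 0)
    (tor3 : ∀ x : R, (3 : ℕ) • x = 0 → x = 0)
    (e₁ : R) (he : e₁ * e₁ = e₁) (he0 : e₁ ≠ 0) (he1 : e₁ ≠ 1)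
    (hd1 : ∀ x : R, (∀ r : R, x * r * e₁ = 0) → x = 0)
    (hd2 : ∀ x : R, (∀ r : R, x * r * (1 - e₁) = 0) → x = 0)
    (φ : R → R) (hadd : ∀ x y : R, φ (x + y) = φ x + φ y)
    (hcomm : ∀ x : R, φ x * x = x * φ x)
    :
    ∀ i j : Fin 2, i ≠ j → ∀ x ∈ peirceSet e₁ i j,
      ∃ z z' : R, (∀ r : R, z * r = r * z) ∧ (∀ r : R, z' * r = r * z') ∧
        peirceE e₁ i * (φ x * peirceE e₁ i) = z * peirceE e₁ i ∧
        peirceE e₁ j * (φ x * peirceE e₁ j) = z' * peirceE e₁ j :=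
  stmt12_general alt1 alt2 tor2 e₁ he hd1 hd2 φ hadd hcomm
end
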